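/- arXiv:2507.01542 — 2 statements merged into one kernel-verified Lean document; each statement's English description precedes it below -/
import Mathlib

section
/- EM monotonicity: suppose for mixture parameters θ and θ' one has Q(θ' | θ) ≥ Q(θ | θ), where Q(θ' | θ) = Σ_i Σ_c t_{ci}(θ) log(π'_c f_c(x_i; θ')) and t_{ci}(θ) = π_c f_c(x_i;θ)/Σ_{c'} π_{c'} f_{c'}(x_i;θ) are the posterior responsibilities. Then the observed log-likelihood satisfies L(θ') ≥ L(θ), where L(θ) = Σ_i log Σ_c π_c f_c(x_i; θ). -/
/-- EM monotonicity: if the expected complete-data log-likelihood (with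
responsibilities computed under `θ`) does not decrease from `θ` to `θ'`, then
the observed log-likelihood does not decrease either. Components are
abstracted as positive densities `g c i = f_c(x_i; θ)`, `g' c i = f_c(x_i; θ')`
with positive mixture weights `π, π'` summing to `1`. -/
theorem em_monotonicity (n C : ℕ) (hC : 0 < C)
    (π π' : Fin C → ℝ) (hπ : ∀ c, 0 < π c) (hπ' : ∀ c, 0 < π' c)
    (hπ1 : ∑ c, π c = 1) (hπ'1 : ∑ c, π' c = 1)
    (g g' : Fin C → Fin n → ℝ)
    (hg : ∀ c i, 0 < g c i) (hg' : ∀ c i, 0 < g' c i)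
    (t : Fin C → Fin n → ℝ)
    (htdef : ∀ c i, t c i = π c * g c i / ∑ c', π c' * g c' i)
    (hQ : ∑ i, ∑ c, t c i * Real.log (π c * g c i) ≤
          ∑ i, ∑ c, t c i * Real.log (π' c * g' c i)) :
    ∑ i, Real.log (∑ c, π c * g c i) ≤ ∑ i, Real.log (∑ c, π' c * g' c i) := by
  -- Key per-point inequality: Q-increment ≤ L-increment.
  have key : ∀ i, (∑ c, t c i * Real.log (π' c * g' c i)) -
      (∑ c, t c i * Real.log (π c * g c i)) ≤
      Real.log (∑ c, π' c * g' c i) - Real.log (∑ c, π c * g c i) := by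
    intro i
    set S : ℝ := ∑ c, π c * g c i with hSdef
    set S' : ℝ := ∑ c, π' c * g' c i with hS'def
    have hS : 0 < S := Finset.sum_pos (fun c _ => mul_pos (hπ c) (hg c i))
      (Finset.univ_nonempty_iff.mpr ⟨⟨0, hC⟩⟩)
    have hS' : 0 < S' := Finset.sum_pos (fun c _ => mul_pos (hπ' c) (hg' c i))
      (Finset.univ_nonempty_iff.mpr ⟨⟨0, hC⟩⟩)
    have ht_pos : ∀ c, 0 < t c i := fun c => by
      rw [htdef c i]; exact div_pos (mul_pos (hπ c) (hg c i)) hS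
    have ht_sum : ∑ c, t c i = 1 := by
      have : ∑ c, t c i = (∑ c, π c * g c i) / S := by
        rw [Finset.sum_div]; exact Finset.sum_congr rfl fun c _ => htdef c i
      rw [this, ← hSdef, div_self hS.ne']
    -- Gibbs: ∑ t log(q/t) ≤ 0 with q c = π' c * g' c i / S'
    have gibbs : ∑ c, t c i * Real.log ((π' c * g' c i / S') / t c i) ≤ 0 := by
      have hbound : ∀ c ∈ Finset.univ,
          t c i * Real.log ((π' c * g' c i / S') / t c i) ≤
          π' c * g' c i / S' - t c i := by
        intro c _
        have hq : 0 < π' c * g' c i / S' := div_pos (mul_pos (hπ' c) (hg' c i)) hS'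
        have hx : 0 < (π' c * g' c i / S') / t c i := div_pos hq (ht_pos c)
        calc t c i * Real.log ((π' c * g' c i / S') / t c i)
            ≤ t c i * ((π' c * g' c i / S') / t c i - 1) := by
              exact mul_le_mul_of_nonneg_left (Real.log_le_sub_one_of_pos hx)
                (ht_pos c).le
          _ = π' c * g' c i / S' - t c i := by
              rw [mul_sub, mul_one, mul_div_cancel₀ _ (ht_pos c).ne']
      calc ∑ c, t c i * Real.log ((π' c * g' c i / S') / t c i)
          ≤ ∑ c, (π' c * g' c i / S' - t c i) := Finset.sum_le_sum hbound
        _ = (∑ c, π' c * g' c i) / S' - ∑ c, t c i := by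
            rw [Finset.sum_sub_distrib, Finset.sum_div]
        _ = 0 := by rw [← hS'def, div_self hS'.ne', ht_sum]; ring
    -- Rewrite the LHS difference using the log decomposition.
    have hexp : ∀ c, t c i * Real.log (π' c * g' c i) -
        t c i * Real.log (π c * g c i) =
        t c i * Real.log ((π' c * g' c i / S') / t c i) +
        t c i * (Real.log S' - Real.log S) := by
      intro c
      have h1 : (0:ℝ) < π' c * g' c i := mul_pos (hπ' c) (hg' c i)
      have h2 : (0:ℝ) < π c * g c i := mul_pos (hπ c) (hg c i)
      have htc : t c i = π c * g c i / S := htdef c i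
      rw [Real.log_div (div_pos h1 hS').ne' (ht_pos c).ne',
        Real.log_div h1.ne' hS'.ne']
      rw [htc, Real.log_div h2.ne' hS.ne']
      ring
    calc (∑ c, t c i * Real.log (π' c * g' c i)) -
        (∑ c, t c i * Real.log (π c * g c i))
        = ∑ c, (t c i * Real.log (π' c * g' c i) -
            t c i * Real.log (π c * g c i)) := by rw [Finset.sum_sub_distrib]
      _ = (∑ c, t c i * Real.log ((π' c * g' c i / S') / t c i)) +
          (∑ c, t c i) * (Real.log S' - Real.log S) := by
            rw [Finset.sum_mul, ← Finset.sum_add_distrib]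
            exact Finset.sum_congr rfl fun c _ => hexp c
      _ ≤ 0 + 1 * (Real.log S' - Real.log S) := by
            rw [ht_sum]; exact add_le_add_left gibbs _
      _ = Real.log S' - Real.log S := by ring
  have hsum : (∑ i, ∑ c, t c i * Real.log (π' c * g' c i)) -
      (∑ i, ∑ c, t c i * Real.log (π c * g c i)) ≤
      (∑ i, Real.log (∑ c, π' c * g' c i)) -
      (∑ i, Real.log (∑ c, π c * g c i)) := by
    rw [← Finset.sum_sub_distrib, ← Finset.sum_sub_distrib]
    exact Finset.sum_le_sum fun i _ => key i
  linarith
end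

section
/- Ky Fan / block-averaging optimality: let S be a real symmetric positive-definite p×p matrix with eigenvalues ℓ₁ ≥ ... ≥ ℓ_p and eigenvectors v₁,...,v_p, and fix a composition γ of p. Among all Σ ∈ Sym₊(γ) (positive-definite with eigenvalue multiplicities exactly γ), the function Σ ↦ log|Σ| + tr(Σ^{-1} S) is minimized by Σ̂ = Σ_{k=1}^d λ̂_k Π̂_k, where λ̂_k is the average of ℓ_j over the k-th block of γ and Π̂_k = Σ_{j in block k} v_j v_j^⊤, with minimum value Σ_k γ_k log λ̂_k + p. -/
open Matrix

lemma idem_facts {n : ℕ} (A : Matrix (Fin n) (Fin n) ℝ) (hsym : Aᵀ = A) (hidem : A * A = A) :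
    A.trace = (A.rank : ℝ) ∧ ∀ c : ℝ, (1 + c • A).det = (1 + c) ^ A.rank := by
  classical
  have hA : A.IsHermitian := by
    rwa [Matrix.IsHermitian, conjTranspose_eq_transpose_of_trivial]
  set U : Matrix (Fin n) (Fin n) ℝ := (hA.eigenvectorUnitary : Matrix (Fin n) (Fin n) ℝ) with hU
  have hUU : U * star U = 1 := (Matrix.mem_unitaryGroup_iff).mp hA.eigenvectorUnitary.2
  have hUU' : star U * U = 1 := mul_eq_one_comm.mp hUU
  have hdiag' : star U * A * U = Matrix.diagonal hA.eigenvalues := by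
    simpa [Unitary.conjStarAlgAut_apply] using hA.conjStarAlgAut_star_eigenvectorUnitary
  have hspec : A = U * Matrix.diagonal hA.eigenvalues * star U := by
    rw [← hdiag']
    rw [show U * (star U * A * U) * star U = (U * star U) * A * (U * star U) by
      simp only [mul_assoc]]
    rw [hUU, one_mul, mul_one]
  have heig : ∀ i, hA.eigenvalues i = 0 ∨ hA.eigenvalues i = 1 := by
    intro i
    have h2 : (Matrix.diagonal hA.eigenvalues) * (Matrix.diagonal hA.eigenvalues)
        = Matrix.diagonal hA.eigenvalues := by
      rw [← hdiag']
      rw [show (star U * A * U) * (star U * A * U) = star U * (A * (U * star U) * A) * U by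
        simp only [mul_assoc]]
      rw [hUU, mul_one, hidem]
    rw [Matrix.diagonal_mul_diagonal] at h2
    have h3 : hA.eigenvalues i * hA.eigenvalues i = hA.eigenvalues i := by
      have := congrArg (fun M => M i i) h2
      simpa using this
    have h4 : hA.eigenvalues i * (hA.eigenvalues i - 1) = 0 := by nlinarith
    rcases mul_eq_zero.mp h4 with h | h
    · exact Or.inl h
    · exact Or.inr (by linarith)
  have hrank : A.rank = (Finset.univ.filter (fun i => hA.eigenvalues i ≠ 0)).card := by
    rw [hA.rank_eq_card_non_zero_eigs, Fintype.card_subtype]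
  constructor
  · have htr : A.trace = (Matrix.diagonal hA.eigenvalues).trace := by
      conv_lhs => rw [hspec]
      rw [Matrix.trace_mul_cycle, hUU', one_mul]
    rw [htr, Matrix.trace_diagonal, hrank]
    have h1 : ∑ i, hA.eigenvalues i
        = ∑ i ∈ Finset.univ.filter (fun i => hA.eigenvalues i ≠ 0), (1 : ℝ) := by
      rw [Finset.sum_filter]
      apply Finset.sum_congr rfl
      intro i _
      rcases heig i with h | h <;> simp [h]
    rw [h1, Finset.sum_const, nsmul_eq_mul, mul_one]
  · intro c
    have h1 : (1 : Matrix (Fin n) (Fin n) ℝ) + c • A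
        = U * (Matrix.diagonal (fun i => 1 + c * hA.eigenvalues i)) * star U := by
      have : (Matrix.diagonal (fun i => 1 + c * hA.eigenvalues i))
          = 1 + c • Matrix.diagonal hA.eigenvalues := by
        rw [← Matrix.diagonal_one, ← Matrix.diagonal_smul, ← Matrix.diagonal_add]
        rfl
      rw [this, mul_add, add_mul, mul_one, hUU, Matrix.mul_smul, Matrix.smul_mul, ← hspec]
    rw [h1, Matrix.det_mul, Matrix.det_mul, mul_comm, ← mul_assoc, ← Matrix.det_mul, hUU',
      Matrix.det_one, one_mul, Matrix.det_diagonal, hrank]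
    rw [← Finset.prod_filter_mul_prod_filter_not Finset.univ (fun i => hA.eigenvalues i ≠ 0)]
    have h1 : ∀ i ∈ Finset.univ.filter (fun i => hA.eigenvalues i ≠ 0),
        1 + c * hA.eigenvalues i = 1 + c := by
      intro i hi
      simp only [Finset.mem_filter] at hi
      rcases heig i with h | h
      · exact absurd h hi.2
      · rw [h, mul_one]
    have h2 : ∀ i ∈ Finset.univ.filter (fun i => ¬ hA.eigenvalues i ≠ 0),
        1 + c * hA.eigenvalues i = 1 := by
      intro i hi
      simp only [Finset.mem_filter, not_not] at hi
      rw [hi.2, mul_zero, add_zero]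
    rw [Finset.prod_congr rfl h1, Finset.prod_congr rfl h2, Finset.prod_const, Finset.prod_const,
      one_pow, mul_one]


/-- triangular sum swap -/
lemma sum_swap_tri (d : ℕ) (f : ℕ → ℕ → ℝ) :
    ∑ k ∈ Finset.range d, ∑ m ∈ Finset.range k, f m k
    = ∑ m ∈ Finset.range d, ∑ k ∈ Finset.Ico (m + 1) d, f m k := by
  induction d with
  | zero => simp
  | succ d ih =>
    rw [Finset.sum_range_succ, ih, Finset.sum_range_succ
      (fun m => ∑ k ∈ Finset.Ico (m + 1) (d + 1), f m k)]
    simp only [Finset.Ico_self, Finset.sum_empty, add_zero]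
    rw [← Finset.sum_add_distrib]
    apply Finset.sum_congr rfl
    intro m hm
    rw [Finset.sum_Ico_succ_top (Nat.succ_le_of_lt (Finset.mem_range.mp hm))]

/-- concatenation of consecutive blocks -/
lemma sum_blocks {M : Type*} [AddCommMonoid M] (q : ℕ → ℕ) (B : ℕ)
    (hq : ∀ x y : ℕ, x ≤ y → y ≤ B → q x ≤ q y)
    (g : ℕ → M) (a b : ℕ) (hab : a ≤ b) (hbB : b ≤ B) :
    ∑ k ∈ Finset.Ico a b, ∑ j ∈ Finset.Ico (q k) (q (k + 1)), g j
    = ∑ j ∈ Finset.Ico (q a) (q b), g j := by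
  induction b with
  | zero => interval_cases a; simp
  | succ b ih =>
    rcases Nat.lt_or_ge a (b + 1) with h | h
    · have hab' : a ≤ b := Nat.lt_succ_iff.mp h
      rw [Finset.sum_Ico_succ_top hab', ih hab' (Nat.le_of_succ_le hbB),
        Finset.sum_Ico_consecutive _ (hq a b hab' (Nat.le_of_succ_le hbB))
          (hq b (b + 1) b.le_succ hbB)]
    · have : a = b + 1 := le_antisymm hab h
      subst this; simp

/-- Abel summation identity -/
lemma abel_identity (d : ℕ) (b Z : ℕ → ℝ) :
    ∑ k ∈ Finset.range d, b k * Z k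
    = b 0 * ∑ k ∈ Finset.range d, Z k
      + ∑ m ∈ Finset.range d, (b (m + 1) - b m) * ∑ k ∈ Finset.Ico (m + 1) d, Z k := by
  have h1 : ∀ k, b k = b 0 + ∑ m ∈ Finset.range k, (b (m + 1) - b m) := fun k => by
    rw [Finset.sum_range_sub]; ring
  calc ∑ k ∈ Finset.range d, b k * Z k
      = ∑ k ∈ Finset.range d,
          (b 0 * Z k + ∑ m ∈ Finset.range k, (b (m + 1) - b m) * Z k) := by
        apply Finset.sum_congr rfl
        intro k _
        rw [← Finset.sum_mul, ← add_mul, ← h1]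
    _ = b 0 * ∑ k ∈ Finset.range d, Z k
        + ∑ k ∈ Finset.range d, ∑ m ∈ Finset.range k, (b (m + 1) - b m) * Z k := by
        rw [Finset.sum_add_distrib, Finset.mul_sum]
    _ = _ := by
        rw [sum_swap_tri d (fun m k => (b (m + 1) - b m) * Z k)]
        congr 1
        apply Finset.sum_congr rfl
        intro m _
        rw [Finset.mul_sum]

/-- weighted sum with [0,1] weights summing to p - t dominates the tail sum -/
lemma weight_sum_ge (p t : ℕ) (ht : t ≤ p) (ℓ : ℕ → ℝ)
    (hdec : ∀ i j : ℕ, i ≤ j → j < p → ℓ j ≤ ℓ i)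
    (w : ℕ → ℝ) (h0 : ∀ j < p, 0 ≤ w j) (h1 : ∀ j < p, w j ≤ 1)
    (hsum : ∑ j ∈ Finset.range p, w j = (p : ℝ) - t) :
    ∑ j ∈ Finset.Ico t p, ℓ j ≤ ∑ j ∈ Finset.range p, w j * ℓ j := by
  rcases Nat.eq_or_lt_of_le ht with h | h
  · subst h
    have hz : ∀ j ∈ Finset.range t, w j = 0 := by
      intro j hj
      exact (Finset.sum_eq_zero_iff_of_nonneg
        (fun j hj => h0 j (Finset.mem_range.mp hj))).mp (by rw [hsum]; ring) j hj
    rw [Finset.Ico_self, Finset.sum_empty,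
      Finset.sum_congr rfl (fun j hj => by rw [hz j hj, zero_mul])]
    simp
  · have hsplit : Finset.range p = Finset.range t ∪ Finset.Ico t p := by
      rw [Finset.range_eq_Ico, Finset.range_eq_Ico]
      exact (Finset.Ico_union_Ico_eq_Ico (Nat.zero_le t) ht).symm
    have hdisj : Disjoint (Finset.range t) (Finset.Ico t p) := by
      rw [Finset.range_eq_Ico]; exact Finset.Ico_disjoint_Ico_consecutive 0 t p
    rw [hsplit, Finset.sum_union hdisj] at hsum ⊢
    have key1 : ∀ j ∈ Finset.range t, w j * ℓ t ≤ w j * ℓ j := by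
      intro j hj
      have hj' := Finset.mem_range.mp hj
      exact mul_le_mul_of_nonneg_left
        (hdec j t (Nat.le_of_lt hj') h) (h0 j (Nat.lt_trans hj' h))
    have key2 : ∀ j ∈ Finset.Ico t p, (1 - w j) * ℓ j ≤ (1 - w j) * ℓ t := by
      intro j hj
      obtain ⟨hj1, hj2⟩ := Finset.mem_Ico.mp hj
      exact mul_le_mul_of_nonneg_left (hdec t j hj1 hj2) (by linarith [h1 j hj2])
    have e1 : ∑ j ∈ Finset.range t, w j * ℓ t ≤ ∑ j ∈ Finset.range t, w j * ℓ j :=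
      Finset.sum_le_sum key1
    have e2 : ∑ j ∈ Finset.Ico t p, (1 - w j) * ℓ j ≤ ∑ j ∈ Finset.Ico t p, (1 - w j) * ℓ t :=
      Finset.sum_le_sum key2
    have ecard : ((Finset.Ico t p).card : ℝ) = (p : ℝ) - t := by
      rw [Nat.card_Ico, Nat.cast_sub ht]
    have hsum' : (∑ j ∈ Finset.range t, w j) - ∑ j ∈ Finset.Ico t p, (1 - w j) = 0 := by
      rw [Finset.sum_sub_distrib, Finset.sum_const, nsmul_eq_mul, mul_one, ecard]
      linarith
    have expand : ∑ j ∈ Finset.range t, w j * ℓ t - ∑ j ∈ Finset.Ico t p, (1 - w j) * ℓ t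
        = ((∑ j ∈ Finset.range t, w j) - ∑ j ∈ Finset.Ico t p, (1 - w j)) * ℓ t := by
      rw [sub_mul, Finset.sum_mul, Finset.sum_mul]
    have expand2 : ∑ j ∈ Finset.Ico t p, (1 - w j) * ℓ j
        = ∑ j ∈ Finset.Ico t p, ℓ j - ∑ j ∈ Finset.Ico t p, w j * ℓ j := by
      rw [← Finset.sum_sub_distrib]
      apply Finset.sum_congr rfl
      intro j _; ring
    have hAD : ∑ j ∈ Finset.range t, w j * ℓ t - ∑ j ∈ Finset.Ico t p, (1 - w j) * ℓ t = 0 := by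
      rw [expand, hsum', zero_mul]
    linarith

/-- key rearrangement inequality via Abel summation -/
lemma abel_key (p d : ℕ) (ℓ : ℕ → ℝ)
    (hdec : ∀ i j : ℕ, i ≤ j → j < p → ℓ j ≤ ℓ i)
    (q : ℕ → ℕ) (hq0 : q 0 = 0) (hqd : q d = p) (hmono : ∀ k < d, q k < q (k + 1))
    (b : ℕ → ℝ) (hb : ∀ m, m + 1 < d → b m ≤ b (m + 1))
    (c : ℕ → ℕ → ℝ) (hc0 : ∀ k < d, ∀ j < p, 0 ≤ c k j)
    (hcol : ∀ j < p, ∑ k ∈ Finset.range d, c k j = 1)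
    (hrow : ∀ k < d, ∑ j ∈ Finset.range p, c k j = (q (k + 1) : ℝ) - (q k : ℝ)) :
    ∑ k ∈ Finset.range d, b k * ∑ j ∈ Finset.Ico (q k) (q (k + 1)), ℓ j
    ≤ ∑ k ∈ Finset.range d, b k * ∑ j ∈ Finset.range p, c k j * ℓ j := by
  have hqmono : ∀ x y : ℕ, x ≤ y → y ≤ d → q x ≤ q y := by
    have step : ∀ (x n : ℕ), x + n ≤ d → q x ≤ q (x + n) := by
      intro x n
      induction n with
      | zero => intro _; simp
      | succ n ih =>
        intro h
        have h1 : x + n < d := by omega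
        calc q x ≤ q (x + n) := ih (by omega)
          _ ≤ q (x + n + 1) := le_of_lt (hmono _ h1)
    intro x y hxy hyd
    have := step x (y - x) (by omega)
    rwa [Nat.add_sub_cancel' hxy] at this
  have hL := abel_identity d b (fun k => ∑ j ∈ Finset.Ico (q k) (q (k + 1)), ℓ j)
  have hR := abel_identity d b (fun k => ∑ j ∈ Finset.range p, c k j * ℓ j)
  rw [hL, hR]
  -- the b 0 terms agree
  have hY : ∑ k ∈ Finset.range d, ∑ j ∈ Finset.Ico (q k) (q (k + 1)), ℓ j
      = ∑ j ∈ Finset.range p, ℓ j := by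
    rw [Finset.range_eq_Ico, sum_blocks q d hqmono ℓ 0 d (Nat.zero_le d) le_rfl, hq0, hqd,
      ← Finset.range_eq_Ico]
  have hX : ∑ k ∈ Finset.range d, ∑ j ∈ Finset.range p, c k j * ℓ j
      = ∑ j ∈ Finset.range p, ℓ j := by
    rw [Finset.sum_comm]
    apply Finset.sum_congr rfl
    intro j hj
    rw [← Finset.sum_mul, hcol j (Finset.mem_range.mp hj), one_mul]
  rw [hY, hX]
  apply add_le_add_right
  apply Finset.sum_le_sum
  intro m hm
  have hmd := Finset.mem_range.mp hm
  rcases Nat.lt_or_ge (m + 1) d with hmd' | hmd'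
  · -- main case
    have hδ : 0 ≤ b (m + 1) - b m := by linarith [hb m hmd']
    apply mul_le_mul_of_nonneg_left _ hδ
    -- left inner sum = tail sum of ℓ
    rw [sum_blocks q d hqmono ℓ (m + 1) d hmd'.le le_rfl, hqd]
    -- right inner sum = weighted sum
    have hswap : ∑ k ∈ Finset.Ico (m + 1) d, ∑ j ∈ Finset.range p, c k j * ℓ j
        = ∑ j ∈ Finset.range p, (∑ k ∈ Finset.Ico (m + 1) d, c k j) * ℓ j := by
      rw [Finset.sum_comm]
      apply Finset.sum_congr rfl
      intro j _
      rw [Finset.sum_mul]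
    rw [hswap]
    have hqp : q (m + 1) ≤ p := hqd ▸ hqmono (m + 1) d hmd'.le le_rfl
    apply weight_sum_ge p (q (m + 1)) hqp ℓ hdec
    · intro j hj
      exact Finset.sum_nonneg fun k hk =>
        hc0 k (Finset.mem_Ico.mp hk).2 j hj
    · intro j hj
      have hs := Finset.sum_Ico_eq_sub (fun k => c k j) (Nat.le_of_lt hmd')
      rw [hs, hcol j hj]
      have : 0 ≤ ∑ k ∈ Finset.range (m + 1), c k j :=
        Finset.sum_nonneg fun k hk =>
          hc0 k (lt_of_lt_of_le (Finset.mem_range.mp hk) hmd'.le) j hj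
      linarith
    · rw [Finset.sum_comm]
      have : ∀ k ∈ Finset.Ico (m + 1) d, ∑ j ∈ Finset.range p, c k j
          = (q (k + 1) : ℝ) - (q k : ℝ) := fun k hk => hrow k (Finset.mem_Ico.mp hk).2
      rw [Finset.sum_congr rfl this]
      have htel : ∑ k ∈ Finset.Ico (m + 1) d, ((q (k + 1) : ℝ) - (q k : ℝ))
          = (q d : ℝ) - (q (m + 1) : ℝ) := by
        rw [Finset.sum_Ico_eq_sub _ (Nat.le_of_lt hmd'), Finset.sum_range_sub
          (fun k => (q k : ℝ)), Finset.sum_range_sub (fun k => (q k : ℝ))]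
        ring
      rw [htel, hqd]
  · -- m + 1 = d : both sides vanish
    have : d ≤ m + 1 := hmd'
    rw [Finset.Ico_eq_empty (by omega : ¬ m + 1 < d)]
    simp

section MatrixHelpers
variable {n : ℕ}

lemma vmv_mul_vmv (x y x' y' : Fin n → ℝ) :
    vecMulVec x y * vecMulVec x' y' = (y ⬝ᵥ x') • vecMulVec x y' := by
  ext i j
  simp only [Matrix.mul_apply, vecMulVec_apply, Matrix.smul_apply, dotProduct, smul_eq_mul,
    Finset.sum_mul]
  exact Finset.sum_congr rfl fun a _ => by ring

lemma trace_vmv (x y : Fin n → ℝ) : (vecMulVec x y).trace = y ⬝ᵥ x := by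
  simp only [Matrix.trace, Matrix.diag, vecMulVec_apply, dotProduct]
  exact Finset.sum_congr rfl fun a _ => by ring

lemma vmv_transpose (x y : Fin n → ℝ) : (vecMulVec x y)ᵀ = vecMulVec y x := by
  ext i j
  simp [vecMulVec_apply, mul_comm]

lemma trace_mul_vmv (P : Matrix (Fin n) (Fin n) ℝ) (x y : Fin n → ℝ) :
    (P * vecMulVec x y).trace = y ⬝ᵥ P *ᵥ x := by
  simp only [Matrix.trace, Matrix.diag, Matrix.mul_apply, vecMulVec_apply, dotProduct,
    Matrix.mulVec, Finset.mul_sum]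
  exact Finset.sum_congr rfl fun a _ => Finset.sum_congr rfl fun i _ => by ring

lemma dot_sum_mulVec (s : Finset ℕ) (A : ℕ → Matrix (Fin n) (Fin n) ℝ) (x y : Fin n → ℝ) :
    x ⬝ᵥ (∑ k ∈ s, A k) *ᵥ y = ∑ k ∈ s, x ⬝ᵥ (A k) *ᵥ y := by
  induction s using Finset.induction_on with
  | empty => simp
  | @insert a s ha ih =>
    rw [Finset.sum_insert ha, Matrix.add_mulVec, dotProduct_add, ih, Finset.sum_insert ha]

lemma psd_dot (A : Matrix (Fin n) (Fin n) ℝ) (hsym : Aᵀ = A) (hidem : A * A = A)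
    (x : Fin n → ℝ) : 0 ≤ x ⬝ᵥ A *ᵥ x := by
  have : A = Aᵀ * A := by rw [hsym, hidem]
  rw [this, ← Matrix.mulVec_mulVec, Matrix.dotProduct_mulVec, Matrix.vecMul_transpose]
  exact Finset.sum_nonneg fun i _ => mul_self_nonneg _

lemma core_det_inv (d : ℕ) (P : ℕ → Matrix (Fin n) (Fin n) ℝ) (lam : ℕ → ℝ)
    (hsym : ∀ k < d, (P k)ᵀ = P k) (hidem : ∀ k < d, P k * P k = P k)
    (horth : ∀ k < d, ∀ k' < d, k ≠ k' → P k * P k' = 0)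
    (hsum : ∑ k ∈ Finset.range d, P k = 1)
    (hlam : ∀ k < d, lam k ≠ 0) :
    (∑ k ∈ Finset.range d, lam k • P k).det
      = ∏ k ∈ Finset.range d, lam k ^ (P k).rank
    ∧ (∑ k ∈ Finset.range d, lam k • P k)⁻¹ = ∑ k ∈ Finset.range d, (lam k)⁻¹ • P k := by
  constructor
  · have main : ∀ s : Finset ℕ, s ⊆ Finset.range d →
        ((1 - ∑ k ∈ s, P k) + ∑ k ∈ s, lam k • P k).det
          = ∏ k ∈ s, lam k ^ (P k).rank := by
      intro s
      induction s using Finset.induction_on with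
      | empty => simp
      | @insert a s ha ih =>
        intro hsub
        have had : a < d := Finset.mem_range.mp (hsub (Finset.mem_insert_self a s))
        have hssub : s ⊆ Finset.range d := fun x hx => hsub (Finset.mem_insert_of_mem hx)
        have hPs : (∑ k ∈ s, P k) * P a = 0 := by
          rw [Finset.sum_mul]
          exact Finset.sum_eq_zero fun k hk =>
            horth k (Finset.mem_range.mp (hssub hk)) a had (fun h => ha (h ▸ hk))
        have hLs : (∑ k ∈ s, lam k • P k) * P a = 0 := by
          rw [Finset.sum_mul]
          apply Finset.sum_eq_zero
          intro k hk
          rw [Matrix.smul_mul, horth k (Finset.mem_range.mp (hssub hk)) a had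
            (fun h => ha (h ▸ hk)), smul_zero]
        have hMstep : (1 - ∑ k ∈ insert a s, P k) + ∑ k ∈ insert a s, lam k • P k
            = ((1 - ∑ k ∈ s, P k) + ∑ k ∈ s, lam k • P k)
              * (1 + (lam a - 1) • P a) := by
          rw [Finset.sum_insert ha, Finset.sum_insert ha, mul_add, mul_one, Matrix.mul_smul,
            add_mul, sub_mul, one_mul, hPs, hLs, sub_zero, add_zero, sub_smul, one_smul]
          abel
        rw [hMstep, Matrix.det_mul, ih hssub, Finset.prod_insert ha,
          (idem_facts (P a) (hsym a had) (hidem a had)).2 (lam a - 1)]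
        have : 1 + (lam a - 1) = lam a := by ring
        rw [this, mul_comm]
    have := main (Finset.range d) le_rfl
    rwa [hsum, sub_self, zero_add] at this
  · apply Matrix.inv_eq_right_inv
    rw [Finset.sum_mul_sum]
    have h1 : ∀ k ∈ Finset.range d,
        ∑ k' ∈ Finset.range d, (lam k • P k) * ((lam k')⁻¹ • P k') = P k := by
      intro k hk
      have hkd := Finset.mem_range.mp hk
      rw [Finset.sum_eq_single k]
      · rw [Matrix.smul_mul, Matrix.mul_smul, hidem k hkd, smul_smul,
          mul_inv_cancel₀ (hlam k hkd), one_smul]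
      · intro k' hk' hne
        rw [Matrix.smul_mul, Matrix.mul_smul,
          horth k hkd k' (Finset.mem_range.mp hk') (Ne.symm hne), smul_zero, smul_zero]
      · intro h; exact absurd hk h
    rw [Finset.sum_congr rfl h1, hsum]

lemma trace_inv_mul (p d : ℕ) (P : ℕ → Matrix (Fin n) (Fin n) ℝ) (lam : ℕ → ℝ)
    (v : ℕ → Fin n → ℝ) (ℓ : ℕ → ℝ) :
    ((∑ k ∈ Finset.range d, (lam k)⁻¹ • P k)
      * (∑ j ∈ Finset.range p, ℓ j • vecMulVec (v j) (v j))).trace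
    = ∑ k ∈ Finset.range d, (lam k)⁻¹
        * ∑ j ∈ Finset.range p, (v j ⬝ᵥ (P k) *ᵥ (v j)) * ℓ j := by
  rw [Finset.sum_mul_sum, Matrix.trace_sum]
  apply Finset.sum_congr rfl
  intro k _
  rw [Matrix.trace_sum, Finset.mul_sum]
  apply Finset.sum_congr rfl
  intro j _
  rw [Matrix.smul_mul, Matrix.mul_smul, Matrix.trace_smul, Matrix.trace_smul, trace_mul_vmv]
  simp only [smul_eq_mul]
  ring

end MatrixHelpers

lemma q_chain (d : ℕ) (q : ℕ → ℕ) (hmono : ∀ k < d, q k < q (k + 1)) :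
    ∀ x y : ℕ, x ≤ y → y ≤ d → q x ≤ q y := by
  have step : ∀ (x n : ℕ), x + n ≤ d → q x ≤ q (x + n) := by
    intro x n
    induction n with
    | zero => intro _; simp
    | succ n ih =>
      intro h
      have h1 : x + n < d := by omega
      calc q x ≤ q (x + n) := ih (by omega)
        _ ≤ q (x + n + 1) := le_of_lt (hmono _ h1)
  intro x y hxy hyd
  have := step x (y - x) (by omega)
  rwa [Nat.add_sub_cancel' hxy] at this

lemma dot_vmv_dot {n : ℕ} (a b x y : Fin n → ℝ) :
    x ⬝ᵥ (vecMulVec a b) *ᵥ y = (x ⬝ᵥ a) * (b ⬝ᵥ y) := by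
  simp only [Matrix.mulVec, vecMulVec_apply, dotProduct, Finset.mul_sum]
  rw [Finset.sum_comm]
  apply Finset.sum_congr rfl
  intro t _
  rw [Finset.sum_mul]
  exact Finset.sum_congr rfl fun i _ => by ring

/-- Block-averaging optimality (PSA maximum likelihood estimate): let `S` be
symmetric positive-definite with orthonormal eigenvectors `v_j` and decreasing
positive eigenvalues `ℓ_j`, and fix a composition of `p` via partial sums `q`.
Among all `Σ ∈ Sym₊(γ)` (positive-definite with eigenvalue multiplicities
exactly `γ`, i.e. admitting a decomposition into strictly-decreasing positive
eigenvalues with mutually-orthogonal symmetric projectors of ranks `γ_k`),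
the function `Σ ↦ log det Σ + tr(Σ⁻¹S)` is at least
`Σ_k γ_k log λ̂_k + p`, and the block-averaged matrix
`Σ̂ = Σ_k λ̂_k Π̂_k` attains this value. -/
theorem psa_mle (p d : ℕ) (hp : 0 < p) (hd : 0 < d)
    (ℓ : ℕ → ℝ) (hdec : ∀ i j : ℕ, i ≤ j → j < p → ℓ j ≤ ℓ i)
    (hpos : ∀ j < p, 0 < ℓ j)
    (v : ℕ → Fin p → ℝ)
    (horthon : ∀ i < p, ∀ j < p, v i ⬝ᵥ v j = if i = j then 1 else 0)
    (q : ℕ → ℕ) (hq0 : q 0 = 0) (hqd : q d = p)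
    (hmono : ∀ k < d, q k < q (k + 1)) :
    let S : Matrix (Fin p) (Fin p) ℝ :=
      ∑ j ∈ Finset.range p, ℓ j • vecMulVec (v j) (v j)
    let γk : ℕ → ℕ := fun k => q (k + 1) - q k
    let lamhat : ℕ → ℝ := fun k =>
      (∑ j ∈ Finset.Ico (q k) (q (k + 1)), ℓ j) / (γk k : ℝ)
    let Phat : ℕ → Matrix (Fin p) (Fin p) ℝ := fun k =>
      ∑ j ∈ Finset.Ico (q k) (q (k + 1)), vecMulVec (v j) (v j)
    let Sighat : Matrix (Fin p) (Fin p) ℝ :=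
      ∑ k ∈ Finset.range d, lamhat k • Phat k
    let obj : Matrix (Fin p) (Fin p) ℝ → ℝ := fun Sig =>
      Real.log Sig.det + (Sig⁻¹ * S).trace
    let minval : ℝ := (∑ k ∈ Finset.range d, (γk k : ℝ) * Real.log (lamhat k)) + p
    (∀ Sig : Matrix (Fin p) (Fin p) ℝ,
      (∃ lam : Fin d → ℝ, ∃ P : Fin d → Matrix (Fin p) (Fin p) ℝ,
        (∀ k, 0 < lam k) ∧ (∀ k k' : Fin d, k < k' → lam k' < lam k) ∧
        (∀ k, (P k)ᵀ = P k) ∧ (∀ k, P k * P k = P k) ∧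
        (∀ k k', k ≠ k' → P k * P k' = 0) ∧ (∑ k, P k = 1) ∧
        (∀ k : Fin d, (P k).rank = γk k) ∧
        Sig = ∑ k, lam k • P k) →
      minval ≤ obj Sig) ∧
    obj Sighat = minval := by
  intro S γk lamhat Phat Sighat obj minval
  -- basic block facts
  have hqle : ∀ k, k ≤ d → q k ≤ p := fun k hk =>
    hqd ▸ q_chain d q hmono k d hk le_rfl
  have hγpos : ∀ k < d, 0 < γk k := fun k hk => Nat.sub_pos_of_lt (hmono k hk)
  have hγcast : ∀ k < d, (γk k : ℝ) = (q (k + 1) : ℝ) - (q k : ℝ) := by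
    intro k hk
    show ((q (k + 1) - q k : ℕ) : ℝ) = _
    rw [Nat.cast_sub (le_of_lt (hmono k hk))]
  have hblocklt : ∀ k < d, ∀ j ∈ Finset.Ico (q k) (q (k + 1)), j < p :=
    fun k hk j hj => lt_of_lt_of_le (Finset.mem_Ico.mp hj).2 (hqle (k + 1) hk)
  have hblockpos : ∀ k < d, 0 < ∑ j ∈ Finset.Ico (q k) (q (k + 1)), ℓ j := by
    intro k hk
    apply Finset.sum_pos
    · intro j hj
      exact hpos j (hblocklt k hk j hj)
    · exact Finset.nonempty_Ico.mpr (hmono k hk)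
  have hlamhatpos : ∀ k < d, 0 < lamhat k := by
    intro k hk
    exact div_pos (hblockpos k hk) (by exact_mod_cast hγpos k hk)
  have hblocksum : ∀ k < d, ∑ j ∈ Finset.Ico (q k) (q (k + 1)), ℓ j = (γk k : ℝ) * lamhat k := by
    intro k hk
    have hγ : (γk k : ℝ) ≠ 0 := by
      have := hγpos k hk; positivity
    show _ = (γk k : ℝ) * ((∑ j ∈ Finset.Ico (q k) (q (k + 1)), ℓ j) / (γk k : ℝ))
    field_simp
  have hsump : ∑ k ∈ Finset.range d, (γk k : ℝ) = (p : ℝ) := by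
    rw [Finset.sum_congr rfl (fun k hk => hγcast k (Finset.mem_range.mp hk)),
      Finset.sum_range_sub (fun k => (q k : ℝ)), hqd, hq0]
    simp
  -- orthonormal completeness
  have hUorth : ∑ j ∈ Finset.range p, vecMulVec (v j) (v j)
      = (1 : Matrix (Fin p) (Fin p) ℝ) := by
    set U : Matrix (Fin p) (Fin p) ℝ := Matrix.of fun j i => v (j : ℕ) i with hU
    have h1 : U * Uᵀ = 1 := by
      ext j j'
      simp only [Matrix.mul_apply, Matrix.transpose_apply, Matrix.one_apply, hU, Matrix.of_apply]
      have h2 := horthon j j.isLt j' j'.isLt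
      simp only [dotProduct] at h2
      rw [h2]
      rcases eq_or_ne j j' with rfl | h
      · simp
      · rw [if_neg (fun hh => h (Fin.ext hh)), if_neg h]
    have h2 : Uᵀ * U = 1 := mul_eq_one_comm.mp h1
    ext i i'
    have h3 := congrFun (congrFun h2 i) i'
    simp only [Matrix.mul_apply, Matrix.transpose_apply, hU, Matrix.of_apply] at h3
    rw [Matrix.sum_apply]
    simp only [vecMulVec_apply]
    rw [← h3]
    exact (Fin.sum_univ_eq_sum_range (fun j => v j i * v j i') p).symm
  -- properties of the Phat projectors
  have hPhat_sym : ∀ k < d, (Phat k)ᵀ = Phat k := by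
    intro k hk
    show (∑ j ∈ Finset.Ico (q k) (q (k + 1)), vecMulVec (v j) (v j))ᵀ = _
    rw [Matrix.transpose_sum]
    exact Finset.sum_congr rfl fun j _ => vmv_transpose _ _
  have hPhat_mul : ∀ k < d, ∀ k' < d,
      Phat k * Phat k' = if k = k' then Phat k else 0 := by
    intro k hk k' hk'
    have hterm : ∀ j ∈ Finset.Ico (q k) (q (k + 1)), ∀ j' ∈ Finset.Ico (q k') (q (k' + 1)),
        vecMulVec (v j) (v j) * vecMulVec (v j') (v j')
          = if j = j' then vecMulVec (v j) (v j) else 0 := by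
      intro j hj j' hj'
      rw [vmv_mul_vmv, horthon j (hblocklt k hk j hj) j' (hblocklt k' hk' j' hj')]
      rcases eq_or_ne j j' with rfl | h
      · simp
      · simp [h]
    show (∑ j ∈ Finset.Ico (q k) (q (k + 1)), vecMulVec (v j) (v j))
        * (∑ j ∈ Finset.Ico (q k') (q (k' + 1)), vecMulVec (v j) (v j)) = _
    rw [Finset.sum_mul]
    rcases eq_or_ne k k' with rfl | hne
    · rw [if_pos rfl]
      apply Finset.sum_congr rfl
      intro j hj
      rw [Finset.mul_sum, Finset.sum_congr rfl (hterm j hj),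
        Finset.sum_ite_eq (Finset.Ico (q k) (q (k + 1))) j
          (fun _ => vecMulVec (v j) (v j)), if_pos hj]
    · rw [if_neg hne]
      apply Finset.sum_eq_zero
      intro j hj
      rw [Finset.mul_sum]
      apply Finset.sum_eq_zero
      intro j' hj'
      have hjj' : j ≠ j' := by
        obtain ⟨a1, a2⟩ := Finset.mem_Ico.mp hj
        obtain ⟨b1, b2⟩ := Finset.mem_Ico.mp hj'
        rcases Nat.lt_or_ge k k' with h | h
        · have := q_chain d q hmono (k + 1) k' h (le_of_lt hk')
          omega
        · have hk'k : k' < k := lt_of_le_of_ne h (Ne.symm hne)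
          have := q_chain d q hmono (k' + 1) k hk'k (le_of_lt hk)
          omega
      rw [hterm j hj j' hj', if_neg hjj']
  have hPhat_idem : ∀ k < d, Phat k * Phat k = Phat k := by
    intro k hk
    have := hPhat_mul k hk k hk
    simpa using this
  have hPhat_orth : ∀ k < d, ∀ k' < d, k ≠ k' → Phat k * Phat k' = 0 := by
    intro k hk k' hk' hne
    have := hPhat_mul k hk k' hk'
    rwa [if_neg hne] at this
  have hPhat_sumone : ∑ k ∈ Finset.range d, Phat k = 1 := by
    show ∑ k ∈ Finset.range d, ∑ j ∈ Finset.Ico (q k) (q (k + 1)), vecMulVec (v j) (v j) = 1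
    rw [Finset.range_eq_Ico,
      sum_blocks q d (q_chain d q hmono) (fun j => vecMulVec (v j) (v j)) 0 d (Nat.zero_le d)
        le_rfl, hq0, hqd, ← Finset.range_eq_Ico, hUorth]
  have hPhat_trace : ∀ k < d, (Phat k).trace = (γk k : ℝ) := by
    intro k hk
    show (∑ j ∈ Finset.Ico (q k) (q (k + 1)), vecMulVec (v j) (v j)).trace = _
    rw [Matrix.trace_sum]
    have h1 : ∀ j ∈ Finset.Ico (q k) (q (k + 1)), (vecMulVec (v j) (v j)).trace = 1 := by
      intro j hj
      rw [trace_vmv, horthon j (hblocklt k hk j hj) j (hblocklt k hk j hj), if_pos rfl]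
    rw [Finset.sum_congr rfl h1, Finset.sum_const, nsmul_eq_mul, mul_one, Nat.card_Ico]
  have hPhat_rank : ∀ k < d, (Phat k).rank = γk k := by
    intro k hk
    have h1 := (idem_facts (Phat k) (hPhat_sym k hk) (hPhat_idem k hk)).1
    rw [hPhat_trace k hk] at h1
    exact_mod_cast h1.symm
  -- the inner dot products of Phat
  have hchat : ∀ k < d, ∀ j < p,
      v j ⬝ᵥ (Phat k) *ᵥ (v j) = if j ∈ Finset.Ico (q k) (q (k + 1)) then 1 else 0 := by
    intro k hk j hj
    show v j ⬝ᵥ (∑ j' ∈ Finset.Ico (q k) (q (k + 1)), vecMulVec (v j') (v j')) *ᵥ (v j) = _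
    rw [dot_sum_mulVec]
    have h1 : ∀ j' ∈ Finset.Ico (q k) (q (k + 1)),
        v j ⬝ᵥ (vecMulVec (v j') (v j')) *ᵥ (v j) = if j = j' then 1 else 0 := by
      intro j' hj'
      rw [dot_vmv_dot, horthon j hj j' (hblocklt k hk j' hj'),
        horthon j' (hblocklt k hk j' hj') j hj]
      rcases eq_or_ne j j' with rfl | h
      · simp
      · rw [if_neg h, if_neg (Ne.symm h)]
        ring
    rw [Finset.sum_congr rfl h1,
      Finset.sum_ite_eq (Finset.Ico (q k) (q (k + 1))) j (fun _ => (1 : ℝ))]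
  constructor
  · rintro Sig ⟨lam, P, hlampos, hlamanti, hPsym, hPidem, hPorth, hPsum, hPrank, hSigeq⟩
    -- transfer to ℕ-indexed data
    set lam' : ℕ → ℝ := fun k => if h : k < d then lam ⟨k, h⟩ else 1 with hlam'
    set P' : ℕ → Matrix (Fin p) (Fin p) ℝ := fun k => if h : k < d then P ⟨k, h⟩ else 0
      with hP'
    have hlam'eq : ∀ k (h : k < d), lam' k = lam ⟨k, h⟩ := fun k h => dif_pos h
    have hP'eq : ∀ k (h : k < d), P' k = P ⟨k, h⟩ := fun k h => dif_pos h
    have hlampos' : ∀ k, 0 < lam' k := by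
      intro k
      by_cases h : k < d
      · rw [hlam'eq k h]; exact hlampos _
      · simp only [hlam', dif_neg h]; norm_num
    have hsym' : ∀ k < d, (P' k)ᵀ = P' k := by
      intro k h; rw [hP'eq k h]; exact hPsym _
    have hidem' : ∀ k < d, P' k * P' k = P' k := by
      intro k h; rw [hP'eq k h]; exact hPidem _
    have horth' : ∀ k < d, ∀ k' < d, k ≠ k' → P' k * P' k' = 0 := by
      intro k h k' h' hne
      rw [hP'eq k h, hP'eq k' h']
      exact hPorth _ _ (fun hh => hne (congrArg Fin.val hh))
    have hsum' : ∑ k ∈ Finset.range d, P' k = 1 := by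
      rw [← Fin.sum_univ_eq_sum_range P' d]
      rw [Finset.sum_congr rfl (fun i _ => hP'eq i.val i.isLt)]
      simpa using hPsum
    have hrank' : ∀ k < d, (P' k).rank = γk k := by
      intro k h; rw [hP'eq k h]; exact hPrank _
    have hSig' : Sig = ∑ k ∈ Finset.range d, lam' k • P' k := by
      rw [hSigeq, ← Fin.sum_univ_eq_sum_range (fun k => lam' k • P' k) d]
      exact Finset.sum_congr rfl fun i _ => by
        rw [hlam'eq i.val i.isLt, hP'eq i.val i.isLt]
    have hlamne' : ∀ k < d, lam' k ≠ 0 := fun k _ => ne_of_gt (hlampos' k)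
    obtain ⟨hdet, hinv⟩ := core_det_inv d P' lam' hsym' hidem' horth' hsum' hlamne'
    -- the coefficients c k j
    set c : ℕ → ℕ → ℝ := fun k j => v j ⬝ᵥ (P' k) *ᵥ (v j) with hc
    have hc0 : ∀ k < d, ∀ j < p, 0 ≤ c k j := fun k hk j _ =>
      psd_dot (P' k) (hsym' k hk) (hidem' k hk) (v j)
    have hcol : ∀ j < p, ∑ k ∈ Finset.range d, c k j = 1 := by
      intro j hj
      rw [hc]
      rw [← dot_sum_mulVec (Finset.range d) P' (v j) (v j), hsum', Matrix.one_mulVec,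
        horthon j hj j hj, if_pos rfl]
    have hrow : ∀ k < d, ∑ j ∈ Finset.range p, c k j = (q (k + 1) : ℝ) - (q k : ℝ) := by
      intro k hk
      have h1 : ∀ j ∈ Finset.range p, c k j = ((P' k) * vecMulVec (v j) (v j)).trace :=
        fun j _ => (trace_mul_vmv (P' k) (v j) (v j)).symm
      rw [Finset.sum_congr rfl h1, ← Matrix.trace_sum, ← Finset.mul_sum, hUorth, mul_one,
        (idem_facts (P' k) (hsym' k hk) (hidem' k hk)).1, hrank' k hk]
      exact hγcast k hk
    -- objective value
    show minval ≤ Real.log Sig.det + (Sig⁻¹ * S).trace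
    have hlog : Real.log Sig.det = ∑ k ∈ Finset.range d, (γk k : ℝ) * Real.log (lam' k) := by
      rw [hSig', hdet, Real.log_prod
        (fun k hk => pow_ne_zero _ (hlamne' k (Finset.mem_range.mp hk)))]
      apply Finset.sum_congr rfl
      intro k hk
      rw [Real.log_pow, hrank' k (Finset.mem_range.mp hk)]
    have hS : S = ∑ j ∈ Finset.range p, ℓ j • vecMulVec (v j) (v j) := rfl
    have htr : (Sig⁻¹ * S).trace
        = ∑ k ∈ Finset.range d, (lam' k)⁻¹ * ∑ j ∈ Finset.range p, c k j * ℓ j := by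
      rw [hSig', hinv, hS, trace_inv_mul p d P' lam' v ℓ]
    rw [hlog, htr]
    -- the rearrangement inequality
    have hb : ∀ m, m + 1 < d → (lam' m)⁻¹ ≤ (lam' (m + 1))⁻¹ := by
      intro m hm
      have h1 : lam' (m + 1) < lam' m := by
        rw [hlam'eq (m + 1) hm, hlam'eq m (Nat.lt_of_succ_lt hm)]
        exact hlamanti _ _ (by exact Fin.mk_lt_mk.mpr (Nat.lt_succ_self m))
      have h2 := hlampos' (m + 1)
      exact le_of_lt (by
        apply inv_strictAnti₀ h2 h1)
    have habel := abel_key p d ℓ hdec q hq0 hqd hmono (fun m => (lam' m)⁻¹) hb c hc0 hcol hrow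
    -- per-block lower bound
    have hperblock : ∀ k ∈ Finset.range d,
        (γk k : ℝ) * Real.log (lamhat k) + (γk k : ℝ)
          ≤ (γk k : ℝ) * Real.log (lam' k)
            + (lam' k)⁻¹ * ∑ j ∈ Finset.Ico (q k) (q (k + 1)), ℓ j := by
      intro k hk
      have hkd := Finset.mem_range.mp hk
      have hγ : (0 : ℝ) ≤ (γk k : ℝ) := Nat.cast_nonneg _
      have hx : 0 < lamhat k / lam' k := div_pos (hlamhatpos k hkd) (hlampos' k)
      have hlogle := Real.log_le_sub_one_of_pos hx
      rw [Real.log_div (ne_of_gt (hlamhatpos k hkd)) (hlamne' k hkd)] at hlogle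
      have h3 := mul_le_mul_of_nonneg_left hlogle hγ
      rw [mul_sub, mul_sub, mul_one] at h3
      rw [hblocksum k hkd]
      have h4 : (lam' k)⁻¹ * ((γk k : ℝ) * lamhat k)
          = (γk k : ℝ) * (lamhat k / lam' k) := by
        field_simp
      rw [h4]
      linarith
    -- assemble
    have hmin : minval
        = ∑ k ∈ Finset.range d, ((γk k : ℝ) * Real.log (lamhat k) + (γk k : ℝ)) := by
      show (∑ k ∈ Finset.range d, (γk k : ℝ) * Real.log (lamhat k)) + (p : ℝ) = _
      rw [Finset.sum_add_distrib, hsump]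
    rw [hmin]
    calc ∑ k ∈ Finset.range d, ((γk k : ℝ) * Real.log (lamhat k) + (γk k : ℝ))
        ≤ ∑ k ∈ Finset.range d, ((γk k : ℝ) * Real.log (lam' k)
            + (lam' k)⁻¹ * ∑ j ∈ Finset.Ico (q k) (q (k + 1)), ℓ j) :=
          Finset.sum_le_sum hperblock
      _ = (∑ k ∈ Finset.range d, (γk k : ℝ) * Real.log (lam' k))
            + ∑ k ∈ Finset.range d, (lam' k)⁻¹
              * ∑ j ∈ Finset.Ico (q k) (q (k + 1)), ℓ j := Finset.sum_add_distrib
      _ ≤ (∑ k ∈ Finset.range d, (γk k : ℝ) * Real.log (lam' k))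
            + ∑ k ∈ Finset.range d, (lam' k)⁻¹ * ∑ j ∈ Finset.range p, c k j * ℓ j := by
          apply add_le_add_right habel
  · -- the block-averaged matrix attains the value
    have hlamhatne : ∀ k < d, lamhat k ≠ 0 := fun k hk => ne_of_gt (hlamhatpos k hk)
    obtain ⟨hdet, hinv⟩ := core_det_inv d Phat lamhat hPhat_sym hPhat_idem hPhat_orth
      hPhat_sumone hlamhatne
    show Real.log Sighat.det + (Sighat⁻¹ * S).trace = minval
    have hSighat : Sighat = ∑ k ∈ Finset.range d, lamhat k • Phat k := rfl
    have hS : S = ∑ j ∈ Finset.range p, ℓ j • vecMulVec (v j) (v j) := rfl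
    have hlog : Real.log Sighat.det
        = ∑ k ∈ Finset.range d, (γk k : ℝ) * Real.log (lamhat k) := by
      rw [hSighat, hdet, Real.log_prod
        (fun k hk => pow_ne_zero _ (hlamhatne k (Finset.mem_range.mp hk)))]
      apply Finset.sum_congr rfl
      intro k hk
      rw [Real.log_pow, hPhat_rank k (Finset.mem_range.mp hk)]
    have htr : (Sighat⁻¹ * S).trace = (p : ℝ) := by
      rw [hSighat, hinv, hS, trace_inv_mul p d Phat lamhat v ℓ]
      have h1 : ∀ k ∈ Finset.range d,
          (lamhat k)⁻¹ * ∑ j ∈ Finset.range p, (v j ⬝ᵥ (Phat k) *ᵥ (v j)) * ℓ j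
            = (γk k : ℝ) := by
        intro k hk
        have hkd := Finset.mem_range.mp hk
        have h2 : ∀ j ∈ Finset.range p, (v j ⬝ᵥ (Phat k) *ᵥ (v j)) * ℓ j
            = if j ∈ Finset.Ico (q k) (q (k + 1)) then ℓ j else 0 := by
          intro j hj
          rw [hchat k hkd j (Finset.mem_range.mp hj)]
          rcases Decidable.em (j ∈ Finset.Ico (q k) (q (k + 1))) with h | h
          · rw [if_pos h, if_pos h, one_mul]
          · rw [if_neg h, if_neg h, zero_mul]
        rw [Finset.sum_congr rfl h2, Finset.sum_ite_mem,
          (Finset.inter_eq_right).mpr (fun j hj => Finset.mem_range.mpr (hblocklt k hkd j hj)),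
          hblocksum k hkd, mul_comm ((lamhat k)⁻¹), mul_assoc,
          mul_inv_cancel₀ (hlamhatne k hkd), mul_one]
      rw [Finset.sum_congr rfl h1, hsump]
    rw [hlog, htr]
end
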